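/- arXiv:2204.04631 — 4 statements merged into one kernel-verified Lean document; each statement's English description precedes it below -/
import Mathlib

section
/- Let T be any bounded linear operator on ℓ². Then the open unit disk {z ∈ ℂ : |z| < 1} is contained in the numerical range W(F_T) of the Foguel operator F_T; consequently the numerical radius satisfies w(F_T) ≥ 1. -/
noncomputable section

/-- The complex Hilbert space `ℓ²(ℕ, ℂ)`. -/
abbrev l2 : Type := lp (fun _ : ℕ => ℂ) 2

/-- The Hilbert space direct sum `ℓ² ⊕ ℓ²`. -/
abbrev H2 : Type := WithLp 2 (l2 × l2)

/-- The numerical range `W(A) = {⟨Ax, x⟩ : ‖x‖ = 1}` of a bounded linear operator,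
with the inner product `⟨u, v⟩` linear in the first argument `u`
(so `⟨Ax, x⟩` is `inner x (A x)` in Mathlib's convention). -/
def numRange {E : Type*} [NormedAddCommGroup E] [InnerProductSpace ℂ E]
    (A : E →L[ℂ] E) : Set ℂ :=
  {z : ℂ | ∃ x : E, ‖x‖ = 1 ∧ (inner ℂ x (A x) : ℂ) = z}

/-- The numerical radius `w(A) = sup {|z| : z ∈ W(A)}`. -/
def numRadius {E : Type*} [NormedAddCommGroup E] [InnerProductSpace ℂ E]
    (A : E →L[ℂ] E) : ℝ :=
  sSup ((fun z : ℂ => ‖z‖) '' numRange A)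

/-! For `‖z‖ < 1` the geometric vector `u = (zⁿ)ₙ ∈ ℓ²` satisfies `⟪S u, u⟫ = z ‖u‖²`, since
`conj (zⁿ) zⁿ⁺¹ = z |z|²ⁿ`; normalising `u` puts `z` in the numerical range of `S*`. Testing `F_T`
on vectors `(x, 0)` kills `T`, so `W(S*) ⊆ W(F_T)`. The numerical radius is then at least the
supremum of `|z|` over the open disk. -/

open scoped InnerProductSpace ComplexConjugate

section NumericalRange

variable {E : Type*} [NormedAddCommGroup E] [InnerProductSpace ℂ E]

theorem norm_le_opNorm_of_mem_numRange {A : E →L[ℂ] E} {z : ℂ} (hz : z ∈ numRange A) :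
    ‖z‖ ≤ ‖A‖ := by
  obtain ⟨x, hx, rfl⟩ := hz
  calc ‖⟪x, A x⟫_ℂ‖ ≤ ‖x‖ * (‖A‖ * ‖x‖) :=
        (norm_inner_le_norm x (A x)).trans (by gcongr; exact A.le_opNorm x)
    _ = ‖A‖ := by rw [hx]; ring

theorem bddAbove_norm_image_numRange (A : E →L[ℂ] E) :
    BddAbove ((fun z : ℂ => ‖z‖) '' numRange A) :=
  ⟨‖A‖, by rintro _ ⟨z, hz, rfl⟩; exact norm_le_opNorm_of_mem_numRange hz⟩

theorem one_le_numRadius_of_ball_subset {A : E →L[ℂ] E}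
    (h : Metric.ball (0 : ℂ) 1 ⊆ numRange A) : 1 ≤ numRadius A := by
  refine le_of_forall_lt_imp_le_of_dense fun t ht => ?_
  have hnorm : ‖((max t 0 : ℝ) : ℂ)‖ = max t 0 := by
    rw [Complex.norm_real, Real.norm_of_nonneg (le_max_right t 0)]
  have hmem : ((max t 0 : ℝ) : ℂ) ∈ numRange A :=
    h (by rw [mem_ball_zero_iff, hnorm]; exact max_lt ht one_pos)
  calc t ≤ max t 0 := le_max_left t 0
    _ = ‖((max t 0 : ℝ) : ℂ)‖ := hnorm.symm
    _ ≤ numRadius A := le_csSup (bddAbove_norm_image_numRange A) ⟨_, hmem, rfl⟩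

theorem inner_div_inner_self_mem_numRange (A : E →L[ℂ] E) {x : E} (hx : x ≠ 0) :
    ⟪x, A x⟫_ℂ / ⟪x, x⟫_ℂ ∈ numRange A := by
  refine ⟨(‖x‖⁻¹ : ℂ) • x, by simp [norm_smul, norm_ne_zero_iff.mpr hx], ?_⟩
  have hxx : ⟪x, x⟫_ℂ = (‖x‖ : ℂ) ^ 2 := inner_self_eq_norm_sq_to_K x
  rw [map_smul, inner_smul_left, inner_smul_right, hxx, map_inv₀,
    Complex.conj_ofReal, div_eq_mul_inv]
  ring

theorem numRange_subset_of_fst_apply {G : Type*} [NormedAddCommGroup G] [InnerProductSpace ℂ G]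
    (A : E →L[ℂ] E) (B : WithLp 2 (E × G) →L[ℂ] WithLp 2 (E × G))
    (hB : ∀ x, (B (WithLp.toLp 2 (x, 0))).fst = A x) : numRange A ⊆ numRange B := by
  rintro _ ⟨x, hx, rfl⟩
  refine ⟨WithLp.toLp 2 (x, 0), ?_, ?_⟩
  · rw [WithLp.prod_norm_eq_of_L2]; simp [hx]
  · rw [WithLp.prod_inner_apply]; simp [hB]

end NumericalRange

theorem memℓp_geometric {p : ENNReal} (hp : 0 < p.toReal) {z : ℂ} (hz : ‖z‖ < 1) :
    Memℓp (fun n : ℕ => z ^ n) p := by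
  refine memℓp_gen ?_
  simp_rw [norm_pow, ← Real.rpow_natCast, ← Real.rpow_mul (norm_nonneg z), mul_comm _ p.toReal,
    Real.rpow_mul (norm_nonneg z), Real.rpow_natCast]
  exact summable_geometric_of_lt_one (by positivity) (Real.rpow_lt_one (norm_nonneg z) hz hp)

def geomVec {z : ℂ} (hz : ‖z‖ < 1) : l2 := ⟨fun n => z ^ n, memℓp_geometric (by norm_num) hz⟩

@[simp]
theorem geomVec_apply {z : ℂ} (hz : ‖z‖ < 1) (n : ℕ) : geomVec hz n = z ^ n := rfl

theorem hasSum_geometric_norm_sq {z : ℂ} (hz : ‖z‖ < 1) :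
    HasSum (fun n : ℕ => ((‖z‖ : ℂ) ^ 2) ^ n) (1 - (‖z‖ : ℂ) ^ 2)⁻¹ :=
  hasSum_geometric_of_norm_lt_one (by simpa [sq_lt_one_iff₀])

theorem inner_self_geomVec {z : ℂ} (hz : ‖z‖ < 1) :
    ⟪geomVec hz, geomVec hz⟫_ℂ = (1 - (‖z‖ : ℂ) ^ 2)⁻¹ := by
  refine (lp.hasSum_inner _ _).unique ((hasSum_geometric_norm_sq hz).congr_fun fun n => ?_)
  rw [geomVec_apply, RCLike.inner_apply, map_pow, ← mul_pow, Complex.mul_conj']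

section Shift

variable {S : l2 →L[ℂ] l2} (hS : ∀ x : l2, (S x) 0 = 0 ∧ ∀ n : ℕ, (S x) (n + 1) = x n)
include hS

theorem hasSum_inner_shift_left (x : l2) :
    HasSum (fun n => conj (x n) * x (n + 1)) ⟪S x, x⟫_ℂ := by
  have h := (hasSum_nat_add_iff' (f := fun n => ⟪(S x) n, x n⟫_ℂ) 1).mpr
    (lp.hasSum_inner (S x) x)
  simp only [Finset.sum_range_one, (hS x).1, (hS x).2, RCLike.inner_apply, map_zero, mul_zero,
    sub_zero] at h
  exact h.congr_fun fun n => mul_comm _ _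

theorem inner_shift_geomVec {z : ℂ} (hz : ‖z‖ < 1) :
    ⟪S (geomVec hz), geomVec hz⟫_ℂ = z * (1 - (‖z‖ : ℂ) ^ 2)⁻¹ := by
  refine (hasSum_inner_shift_left hS _).unique
    (((hasSum_geometric_norm_sq hz).mul_left z).congr_fun fun n => ?_)
  rw [geomVec_apply, geomVec_apply, map_pow, pow_succ', ← mul_assoc, mul_comm _ z, mul_assoc,
    ← mul_pow, Complex.conj_mul']

theorem ball_subset_numRange_adjoint_shift :
    Metric.ball (0 : ℂ) 1 ⊆ numRange (ContinuousLinearMap.adjoint S) := by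
  intro z hz
  rw [mem_ball_zero_iff] at hz
  have hnorm : (1 - (‖z‖ : ℂ) ^ 2)⁻¹ ≠ 0 := by
    refine inv_ne_zero (sub_ne_zero.mpr ?_)
    exact_mod_cast (pow_lt_one₀ (norm_nonneg z) hz two_ne_zero).ne'
  have hne : geomVec hz ≠ 0 := fun h => hnorm <| by
    rw [← inner_self_geomVec hz, h, inner_zero_left]
  convert inner_div_inner_self_mem_numRange _ hne
  rw [ContinuousLinearMap.adjoint_inner_right, inner_shift_geomVec hS, inner_self_geomVec,
    mul_div_cancel_right₀ _ hnorm]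

end Shift

/-- For any bounded operator `T` on `ℓ²`, the open unit disk is contained in the numerical
range of the Foguel operator `F_T = [[S*, T], [0, S]]`, and hence `w(F_T) ≥ 1`. -/
theorem open_unit_disk_subset_numRange_foguel
    (T S : l2 →L[ℂ] l2)
    (hS : ∀ x : l2, (S x) 0 = 0 ∧ ∀ n : ℕ, (S x) (n + 1) = x n)
    (F : H2 →L[ℂ] H2)
    (hF : ∀ x y : l2, F ((WithLp.equiv 2 (l2 × l2)).symm (x, y)) =
      (WithLp.equiv 2 (l2 × l2)).symm ((ContinuousLinearMap.adjoint S) x + T y, S y)) :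
    Metric.ball (0 : ℂ) 1 ⊆ numRange F ∧ 1 ≤ numRadius F := by
  have hdisk : Metric.ball (0 : ℂ) 1 ⊆ numRange F :=
    (ball_subset_numRange_adjoint_shift hS).trans <|
      numRange_subset_of_fst_apply _ _ fun x => by
        rw [← WithLp.equiv_symm_apply, hF, map_zero, add_zero]; rfl
  exact ⟨hdisk, one_le_numRadius_of_ball_subset hdisk⟩
end
end

section
/- For every a ∈ ℂ, the numerical radius of the Foguel operator F_{aI} equals 1 + |a|/2. -/
/-!
For `v = (x, y)` one has `⟪v, F v⟫ = ⟪S x, x⟫ + a ⟪x, y⟫ + ⟪y, S y⟫`. As `S` is an isometry, the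
outer terms are bounded by `‖x‖²` and `‖y‖²`, and `|a ⟪x, y⟫| ≤ |a| (‖x‖² + ‖y‖²) / 2`; hence
`w(F) ≤ 1 + |a|/2`. Conversely, for a unit vector `u` and `|ω| = 1` with `ω a = |a|`, the unit
vector `v = (u, ω u) / √2` gives `⟪v, F v⟫ = Re ⟪u, S u⟫ + |a|/2`, and for the normalised
indicator vector `u` of `{0, …, N - 1}` one has `⟪u, S u⟫ = (N - 1)/N → 1`.
-/

noncomputable section

open scoped ComplexConjugate InnerProductSpace

section NumericalRadius

variable {E : Type*} [NormedAddCommGroup E] [InnerProductSpace ℂ E] (A : E →L[ℂ] E)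

lemma bddAbove_norm_numRange : BddAbove ((fun z : ℂ => ‖z‖) '' numRange A) := by
  refine ⟨‖A‖, ?_⟩
  rintro _ ⟨_, ⟨x, hx, rfl⟩, rfl⟩
  calc ‖⟪x, A x⟫_ℂ‖ ≤ ‖x‖ * ‖A x‖ := norm_inner_le_norm _ _
    _ ≤ ‖x‖ * (‖A‖ * ‖x‖) := by gcongr; exact A.le_opNorm x
    _ = ‖A‖ := by rw [hx]; ring

lemma norm_le_numRadius {z : ℂ} (hz : z ∈ numRange A) : ‖z‖ ≤ numRadius A :=
  le_csSup (bddAbove_norm_numRange A) ⟨z, hz, rfl⟩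

lemma numRadius_le_of_norm_inner_le {C : ℝ} (hC : 0 ≤ C)
    (h : ∀ x : E, ‖x‖ = 1 → ‖⟪x, A x⟫_ℂ‖ ≤ C) : numRadius A ≤ C := by
  refine Real.sSup_le ?_ hC
  rintro _ ⟨_, ⟨x, hx, rfl⟩, rfl⟩
  exact h x hx

end NumericalRadius

section Foguel

variable {E : Type*} [NormedAddCommGroup E] [InnerProductSpace ℂ E] [CompleteSpace E]

def IsFoguel (S T : E →L[ℂ] E) (F : WithLp 2 (E × E) →L[ℂ] WithLp 2 (E × E)) : Prop :=
  ∀ x y : E, F ((WithLp.equiv 2 (E × E)).symm (x, y)) =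
    (WithLp.equiv 2 (E × E)).symm ((ContinuousLinearMap.adjoint S) x + T y, S y)

variable {S T : E →L[ℂ] E} {F : WithLp 2 (E × E) →L[ℂ] WithLp 2 (E × E)}

lemma IsFoguel.inner_apply (hF : IsFoguel S T F) (x y : E) :
    ⟪(WithLp.equiv 2 (E × E)).symm (x, y), F ((WithLp.equiv 2 (E × E)).symm (x, y))⟫_ℂ =
      ⟪S x, x⟫_ℂ + ⟪x, T y⟫_ℂ + ⟪y, S y⟫_ℂ := by
  rw [hF, WithLp.prod_inner_apply]
  simp only [WithLp.equiv_symm_apply, inner_add_right,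
    ContinuousLinearMap.adjoint_inner_right]

lemma IsFoguel.norm_inner_le (hS : ∀ x, ‖S x‖ ≤ ‖x‖) (hF : IsFoguel S T F)
    (v : WithLp 2 (E × E)) : ‖⟪v, F v⟫_ℂ‖ ≤ (1 + ‖T‖ / 2) * ‖v‖ ^ 2 := by
  obtain ⟨⟨x, y⟩⟩ := v
  have hxy : 2 * ‖x‖ * ‖y‖ ≤ ‖x‖ ^ 2 + ‖y‖ ^ 2 := two_mul_le_add_sq _ _
  rw [← WithLp.equiv_symm_apply, hF.inner_apply, WithLp.prod_norm_sq_eq_of_L2]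
  calc ‖⟪S x, x⟫_ℂ + ⟪x, T y⟫_ℂ + ⟪y, S y⟫_ℂ‖
      ≤ ‖S x‖ * ‖x‖ + ‖x‖ * ‖T y‖ + ‖y‖ * ‖S y‖ := by
        refine (norm_add₃_le).trans ?_
        gcongr <;> exact norm_inner_le_norm _ _
    _ ≤ ‖x‖ * ‖x‖ + ‖x‖ * (‖T‖ * ‖y‖) + ‖y‖ * ‖y‖ := by
        gcongr
        exacts [hS x, T.le_opNorm y, hS y]
    _ ≤ (1 + ‖T‖ / 2) * (‖x‖ ^ 2 + ‖y‖ ^ 2) := by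
        nlinarith [norm_nonneg T]

lemma IsFoguel.numRadius_le (hS : ∀ x, ‖S x‖ ≤ ‖x‖) (hF : IsFoguel S T F) :
    numRadius F ≤ 1 + ‖T‖ / 2 :=
  numRadius_le_of_norm_inner_le F (by positivity) fun v hv => by
    simpa [hv] using hF.norm_inner_le hS v

variable {a : ℂ}

lemma IsFoguel.re_inner_add_mem_numRange (hF : IsFoguel S (a • 1) F) {u : E} (hu : ‖u‖ = 1) :
    (((⟪u, S u⟫_ℂ).re + ‖a‖ / 2 : ℝ) : ℂ) ∈ numRange F := by
  obtain ⟨ω, hω, hωa⟩ := Complex.exists_norm_eq_mul_self a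
  set r : ℂ := (((√2)⁻¹ : ℝ) : ℂ)
  have hr : conj r * r = 1 / 2 := by
    simp [r, ← Complex.ofReal_mul, ← mul_inv]
  have hω' : conj ω * ω = 1 := by
    rw [← Complex.normSq_eq_conj_mul_self, Complex.normSq_eq_norm_sq, hω]; norm_num
  refine ⟨(WithLp.equiv 2 (E × E)).symm (r • u, (ω * r) • u), ?_, ?_⟩
  · rw [WithLp.equiv_symm_apply, WithLp.prod_norm_eq_of_L2]
    norm_num [norm_smul, hω, hu, r]
  · rw [hF.inner_apply]
    simp only [smul_apply, one_apply_eq_self, map_smul,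
      inner_smul_left, inner_smul_right, inner_self_eq_norm_sq_to_K, hu]
    rw [← inner_conj_symm (S u), Complex.ofReal_add, Complex.re_eq_add_conj]
    push_cast [map_mul]
    linear_combination (conj ⟪u, S u⟫_ℂ + ω * a + conj ω * ω * ⟪u, S u⟫_ℂ) * hr - hωa / 2
      + ⟪u, S u⟫_ℂ / 2 * hω'

end Foguel

section Shift

def IsRightShift (S : l2 →L[ℂ] l2) : Prop :=
  ∀ x : l2, (S x) 0 = 0 ∧ ∀ n : ℕ, (S x) (n + 1) = x n

variable {S : l2 →L[ℂ] l2}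

lemma IsRightShift.inner_map_map (hS : IsRightShift S) (x y : l2) :
    ⟪S x, S y⟫_ℂ = ⟪x, y⟫_ℂ := by
  have hsum : Summable fun i => ⟪S x i, S y i⟫_ℂ := lp.summable_inner (S x) (S y)
  rw [lp.inner_eq_tsum, lp.inner_eq_tsum, hsum.tsum_eq_zero_add]
  simp [(hS x).1, (hS x).2, (hS y).1, (hS y).2]

lemma IsRightShift.norm_map (hS : IsRightShift S) (x : l2) : ‖S x‖ = ‖x‖ := by
  rw [@norm_eq_sqrt_re_inner ℂ, hS.inner_map_map, ← @norm_eq_sqrt_re_inner ℂ]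

def onesVec (N : ℕ) : l2 := ∑ i ∈ Finset.range N, lp.single 2 i (1 : ℂ)

lemma onesVec_apply (N j : ℕ) : onesVec N j = if j < N then 1 else 0 := by
  rw [onesVec, lp.coeFn_sum]
  simp [lp.single_apply]

lemma inner_onesVec_left (N : ℕ) (f : l2) : ⟪onesVec N, f⟫_ℂ = ∑ i ∈ Finset.range N, f i := by
  simp [onesVec, lp.inner_single_left]

lemma norm_onesVec (N : ℕ) : ‖onesVec N‖ = √N := by
  have h : ⟪onesVec N, onesVec N⟫_ℂ = N := by
    rw [inner_onesVec_left, Finset.sum_congr rfl fun i hi => by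
      rw [onesVec_apply, if_pos (Finset.mem_range.mp hi)]]
    simp
  rw [@norm_eq_sqrt_re_inner ℂ, h]
  simp

lemma IsRightShift.inner_onesVec_map (hS : IsRightShift S) (M : ℕ) :
    ⟪onesVec (M + 1), S (onesVec (M + 1))⟫_ℂ = M := by
  rw [inner_onesVec_left, Finset.sum_range_succ', (hS _).1, add_zero]
  rw [Finset.sum_congr rfl fun i hi => by
    rw [(hS _).2, onesVec_apply, if_pos (Nat.lt_succ_of_lt (Finset.mem_range.mp hi))]]
  simp

lemma IsRightShift.exists_norm_eq_one_inner_map_eq (hS : IsRightShift S) (M : ℕ) :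
    ∃ u : l2, ‖u‖ = 1 ∧ ⟪u, S u⟫_ℂ = (M / (M + 1) : ℝ) := by
  have hN : (0 : ℝ) < M + 1 := by positivity
  refine ⟨((√(M + 1 : ℝ))⁻¹ : ℂ) • onesVec (M + 1), ?_, ?_⟩
  · rw [norm_smul, norm_onesVec, norm_inv, Complex.norm_real,
      Real.norm_of_nonneg (Real.sqrt_nonneg _)]
    push_cast
    exact inv_mul_cancel₀ (by positivity)
  · simp only [map_smul, inner_smul_left, inner_smul_right, hS.inner_onesVec_map]
    rw [map_inv₀, Complex.conj_ofReal, ← mul_assoc, ← mul_inv, ← Complex.ofReal_mul,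
      Real.mul_self_sqrt hN.le]
    push_cast
    ring

end Shift

/-- For every `a ∈ ℂ`, the numerical radius of the Foguel operator `F_{aI}`
equals `1 + |a|/2`. -/
theorem numRadius_foguel_eq (a : ℂ)
    (S : l2 →L[ℂ] l2)
    (hS : ∀ x : l2, (S x) 0 = 0 ∧ ∀ n : ℕ, (S x) (n + 1) = x n)
    (F : H2 →L[ℂ] H2)
    (hF : ∀ x y : l2, F ((WithLp.equiv 2 (l2 × l2)).symm (x, y)) =
      (WithLp.equiv 2 (l2 × l2)).symm ((ContinuousLinearMap.adjoint S) x + a • y, S y)) :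
    numRadius F = 1 + ‖a‖ / 2 := by
  have hShift : IsRightShift S := hS
  have hFoguel : IsFoguel S (a • 1) F := fun x y => by simpa using hF x y
  apply le_antisymm
  · calc numRadius F ≤ 1 + ‖a • (1 : l2 →L[ℂ] l2)‖ / 2 :=
          hFoguel.numRadius_le fun x => (hShift.norm_map x).le
      _ ≤ 1 + ‖a‖ / 2 := by
          gcongr
          have h1 : ‖(1 : l2 →L[ℂ] l2)‖ ≤ 1 := ContinuousLinearMap.norm_id_le
          exact (norm_smul_le a _).trans (mul_le_of_le_one_right (norm_nonneg a) h1)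
  · have hmem (M : ℕ) : ((M / (M + 1) + ‖a‖ / 2 : ℝ) : ℂ) ∈ numRange F := by
      obtain ⟨u, hu, huSu⟩ := hShift.exists_norm_eq_one_inner_map_eq M
      simpa only [huSu, Complex.ofReal_re] using hFoguel.re_inner_add_mem_numRange hu
    refine le_of_tendsto' ((tendsto_natCast_div_add_atTop (1 : ℝ)).add tendsto_const_nhds)
      fun M => ?_
    have hpos : (0 : ℝ) ≤ M / (M + 1) + ‖a‖ / 2 := by positivity
    simpa only [Complex.norm_real, Real.norm_of_nonneg hpos] using norm_le_numRadius F (hmem M)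
end
end

section
/- For every a ∈ ℂ, the numerical range W(F_{aI}) is symmetric with respect to both coordinate axes: if z ∈ W(F_{aI}), then both the complex conjugate of z and −z belong to W(F_{aI}). -/
noncomputable section

/-! `F` is unitarily equivalent both to its adjoint and to `-F`, and the numerical range is
invariant under unitary equivalence, turns into its complex conjugate under taking adjoints and
into its negative under negation. Explicitly, `F U = U F*` for `U (x, y) = (y, b x)` with
`|b| = 1` and `a b = ā`, and `F V = -V F` for `V = diag(J, -J)`, where `J = diag((-1)ⁿ)`
anticommutes with `S` and hence with `S*`. -/

open ContinuousLinearMap ComplexConjugate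

section NumRange

variable {E E' : Type*} [NormedAddCommGroup E] [InnerProductSpace ℂ E]
  [NormedAddCommGroup E'] [InnerProductSpace ℂ E']

theorem numRange_subset_of_intertwines (U : E →ₗᵢ[ℂ] E') {A : E →L[ℂ] E} {B : E' →L[ℂ] E'}
    (h : ∀ x, B (U x) = U (A x)) : numRange A ⊆ numRange B := by
  rintro _ ⟨x, hx, rfl⟩
  exact ⟨U x, by rwa [U.norm_map], by rw [h, U.inner_map_map]⟩

theorem neg_mem_numRange_neg {A : E →L[ℂ] E} {z : ℂ} (hz : z ∈ numRange A) :
    -z ∈ numRange (-A) := by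
  obtain ⟨x, hx, rfl⟩ := hz
  exact ⟨x, hx, by rw [neg_apply, inner_neg_right]⟩

theorem conj_mem_numRange_adjoint [CompleteSpace E] {A : E →L[ℂ] E} {z : ℂ}
    (hz : z ∈ numRange A) : conj z ∈ numRange (adjoint A) := by
  obtain ⟨x, hx, rfl⟩ := hz
  exact ⟨x, hx, by rw [adjoint_inner_right, inner_conj_symm]⟩

theorem adjoint_map_of_anticommute [CompleteSpace E] {J : E →ₗᵢ[ℂ] E}
    (hJ : ∀ x, J (J x) = x) {T : E →L[ℂ] E} (hT : ∀ x, T (J x) = -J (T x)) (x : E) :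
    adjoint T (J x) = -J (adjoint T x) := by
  have inner_J_left (p q : E) : inner ℂ (J p) q = inner ℂ p (J q) := by
    rw [← J.inner_map_map, hJ]
  refine ext_inner_left ℂ fun w => ?_
  calc inner ℂ w (adjoint T (J x)) = inner ℂ (J (T w)) x := by
        rw [adjoint_inner_right, inner_J_left]
    _ = -inner ℂ (J w) (adjoint T x) := by
        rw [adjoint_inner_right, hT, inner_neg_left, neg_neg]
    _ = inner ℂ w (-J (adjoint T x)) := by rw [inner_J_left, inner_neg_right]

end NumRange

theorem exists_unitary_mul_eq_conj (a : ℂ) : ∃ b : unitary ℂ, a * b = conj a := by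
  rcases eq_or_ne a 0 with rfl | ha
  · exact ⟨1, by simp⟩
  · have hconj : conj a ≠ 0 := (map_ne_zero _).mpr ha
    refine ⟨⟨conj a / a, ?_⟩, by field_simp⟩
    rw [Unitary.mem_iff_star_mul_self]
    simp only [star_div₀, Complex.star_def, Complex.conj_conj]
    field_simp

def altSign : l2 →ₗᵢ[ℂ] l2 where
  toFun x := ⟨fun n => (-1 : ℂ) ^ n * x n, Memℓp.of_norm <| by
    simpa only [norm_mul, norm_pow, norm_neg, norm_one, one_pow, one_mul] using (lp.memℓp x).norm⟩
  map_add' x y := lp.ext <| funext fun n => mul_add _ _ _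
  map_smul' c x := lp.ext <| funext fun n => mul_left_comm _ c _
  norm_map' x := by
    rw [lp.norm_eq_tsum_rpow (by norm_num), lp.norm_eq_tsum_rpow (by norm_num) x]
    simp

@[simp] theorem altSign_apply (x : l2) (n : ℕ) : altSign x n = (-1) ^ n * x n := rfl

theorem altSign_altSign (x : l2) : altSign (altSign x) = x :=
  lp.ext <| funext fun n => by simp [← mul_assoc, ← mul_pow]

theorem shift_altSign {S : l2 →L[ℂ] l2}
    (hS : ∀ x : l2, (S x) 0 = 0 ∧ ∀ n : ℕ, (S x) (n + 1) = x n) (x : l2) :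
    S (altSign x) = -altSign (S x) := by
  refine lp.ext <| funext fun n => ?_
  cases n with
  | zero => simp [(hS _).1]
  | succ n => simp [(hS _).2, pow_succ]

section Foguel

variable {a : ℂ} {S : l2 →L[ℂ] l2} {F : H2 →L[ℂ] H2}

theorem foguel_adjoint_apply
    (hF : ∀ x y : l2, F (WithLp.toLp 2 (x, y)) = WithLp.toLp 2 (adjoint S x + a • y, S y))
    (x y : l2) :
    adjoint F (WithLp.toLp 2 (x, y)) = WithLp.toLp 2 (S x, adjoint S y + conj a • x) := by
  refine ext_inner_left ℂ fun w => ?_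
  rcases w with ⟨w, w'⟩
  rw [adjoint_inner_right, hF]
  simp only [WithLp.prod_inner_apply, inner_add_left, inner_add_right, inner_smul_left,
    inner_smul_right, ← adjoint_inner_right, adjoint_adjoint]
  ring

def swapSmul (b : unitary ℂ) : H2 →ₗᵢ[ℂ] H2 :=
  ((LinearIsometryEquiv.withLpProdComm 2 ℂ l2 l2).trans
    (LinearIsometryEquiv.withLpProdCongr 2 (LinearIsometryEquiv.refl ℂ l2)
      (b • LinearIsometryEquiv.refl ℂ l2))).toLinearIsometry

@[simp] theorem swapSmul_apply (b : unitary ℂ) (x y : l2) :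
    swapSmul b (WithLp.toLp 2 (x, y)) = WithLp.toLp 2 (y, (b : ℂ) • x) := rfl

def signDiag : H2 →ₗᵢ[ℂ] H2 :=
  LinearIsometry.withLpProdMap 2 altSign
    ((LinearIsometryEquiv.neg ℂ).toLinearIsometry.comp altSign)

@[simp] theorem signDiag_apply (x y : l2) :
    signDiag (WithLp.toLp 2 (x, y)) = WithLp.toLp 2 (altSign x, -altSign y) := rfl

theorem foguel_swapSmul
    (hF : ∀ x y : l2, F (WithLp.toLp 2 (x, y)) = WithLp.toLp 2 (adjoint S x + a • y, S y))
    {b : unitary ℂ} (hb : a * b = conj a) (u : H2) :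
    F (swapSmul b u) = swapSmul b (adjoint F u) := by
  rcases u with ⟨x, y⟩
  rw [foguel_adjoint_apply hF, swapSmul_apply, swapSmul_apply, hF, smul_smul, hb, map_smul]

theorem foguel_signDiag (hS : ∀ x : l2, (S x) 0 = 0 ∧ ∀ n : ℕ, (S x) (n + 1) = x n)
    (hF : ∀ x y : l2, F (WithLp.toLp 2 (x, y)) = WithLp.toLp 2 (adjoint S x + a • y, S y))
    (u : H2) :
    F (signDiag u) = signDiag ((-F) u) := by
  rcases u with ⟨x, y⟩
  rw [signDiag_apply, hF, neg_apply, hF, ← WithLp.toLp_neg, Prod.neg_mk, signDiag_apply]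
  simp only [map_neg, map_add, map_smul, smul_neg, neg_add, neg_neg, shift_altSign hS,
    adjoint_map_of_anticommute altSign_altSign (shift_altSign hS)]

end Foguel

/-- For every `a ∈ ℂ`, the numerical range `W(F_{aI})` is symmetric with respect to both
coordinate axes: it is closed under complex conjugation and under negation. -/
theorem numRange_foguel_symm (a : ℂ)
    (S : l2 →L[ℂ] l2)
    (hS : ∀ x : l2, (S x) 0 = 0 ∧ ∀ n : ℕ, (S x) (n + 1) = x n)
    (F : H2 →L[ℂ] H2)
    (hF : ∀ x y : l2, F ((WithLp.equiv 2 (l2 × l2)).symm (x, y)) =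
      (WithLp.equiv 2 (l2 × l2)).symm ((ContinuousLinearMap.adjoint S) x + a • y, S y)) :
    ∀ z ∈ numRange F, (starRingEnd ℂ) z ∈ numRange F ∧ -z ∈ numRange F := by
  simp only [WithLp.equiv_symm_apply] at hF
  intro z hz
  obtain ⟨b, hb⟩ := exists_unitary_mul_eq_conj a
  exact ⟨numRange_subset_of_intertwines (swapSmul b) (foguel_swapSmul hF hb)
      (conj_mem_numRange_adjoint hz),
    numRange_subset_of_intertwines signDiag (foguel_signDiag hS hF) (neg_mem_numRange_neg hz)⟩
end
end

section
/- Let λ ≥ 1 and θ ∈ [0, π/2], and define f(t) = Re(t²) + Re(e^{2iθ}) − 4λ·Re(t)·cos θ for t on the unit circle. Then the image {f(t) : t ∈ ℂ, |t| = 1} equals the closed interval [2cos²θ − 4λcos θ, 2cos²θ + 4λcos θ] if λ·cos θ ≥ 1, and equals the closed interval [2(1 − λ²)cos²θ − 2, 2cos²θ + 4λcos θ] if λ·cos θ < 1. -/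
/-!
On the unit circle `Re(t²) = 2 Re(t)² - 1`, and `Re(e^{2iθ}) = 2cos²θ - 1`, so with `x = Re t` and
`a = λ cos θ ≥ 0` the function is `2(x² - 2ax) + 2cos²θ - 2` for `x` ranging over `[-1, 1]`.
The parabola `x² - 2ax` has its vertex at `a ≥ 0`, so on `[-1, 1]` its maximum is at `-1`, and its
minimum is at `1` when `a ≥ 1` and at the vertex `a` otherwise; by connectedness the image of
`[-1, 1]` is the interval between these extreme values.
-/

open Set

theorem Complex.re_sq_of_norm_eq_one {t : ℂ} (ht : ‖t‖ = 1) : (t ^ 2).re = 2 * t.re ^ 2 - 1 := by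
  have hnormSq := Complex.normSq_eq_norm_sq t
  rw [ht, Complex.normSq_apply] at hnormSq
  rw [pow_two, Complex.mul_re]
  linarith

theorem Complex.exists_norm_eq_one_re_eq {x : ℝ} (hx : x ∈ Icc (-1) 1) :
    ∃ t : ℂ, ‖t‖ = 1 ∧ t.re = x :=
  ⟨Complex.exp (Real.arccos x * Complex.I), Complex.norm_exp_ofReal_mul_I _, by
    rw [Complex.exp_ofReal_mul_I_re, Real.cos_arccos hx.1 hx.2]⟩

theorem setOf_eq_image_Icc_of_norm_eq_one {F : ℂ → ℝ} {h : ℝ → ℝ}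
    (hF : ∀ t : ℂ, ‖t‖ = 1 → F t = h t.re) :
    {y : ℝ | ∃ t : ℂ, ‖t‖ = 1 ∧ y = F t} = h '' Icc (-1) 1 := by
  ext y
  constructor
  · rintro ⟨t, ht, rfl⟩
    exact ⟨t.re, abs_le.mp (ht ▸ Complex.abs_re_le_norm t), (hF t ht).symm⟩
  · rintro ⟨x, hx, rfl⟩
    obtain ⟨t, ht, rfl⟩ := Complex.exists_norm_eq_one_re_eq hx
    exact ⟨t, ht, (hF t ht).symm⟩

theorem IsPreconnected.image_eq_Icc_of_isMinOn_of_isMaxOn {α β : Type*} [TopologicalSpace α]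
    [TopologicalSpace β] [LinearOrder β] [OrderClosedTopology β] {s : Set α} {f : α → β}
    {u v : α} (hs : IsPreconnected s) (hf : ContinuousOn f s) (hu : u ∈ s) (hv : v ∈ s)
    (hmin : IsMinOn f s u) (hmax : IsMaxOn f s v) :
    f '' s = Icc (f u) (f v) := by
  refine Subset.antisymm ?_ ((hs.image f hf).Icc_subset (mem_image_of_mem f hu)
    (mem_image_of_mem f hv))
  rintro _ ⟨x, hx, rfl⟩
  exact ⟨hmin hx, hmax hx⟩

section Parabola

variable {a : ℝ}

theorem isMinOn_sq_sub_two_mul_vertex (s : Set ℝ) : IsMinOn (fun x : ℝ => x ^ 2 - 2 * a * x) s a :=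
  isMinOn_iff.mpr fun x _ => by nlinarith [sq_nonneg (x - a)]

theorem isMinOn_sq_sub_two_mul_one (ha : 1 ≤ a) :
    IsMinOn (fun x : ℝ => x ^ 2 - 2 * a * x) (Icc (-1) 1) 1 :=
  isMinOn_iff.mpr fun x hx => by nlinarith [mem_Icc.mp hx]

theorem isMaxOn_sq_sub_two_mul_neg_one (ha : 0 ≤ a) :
    IsMaxOn (fun x : ℝ => x ^ 2 - 2 * a * x) (Icc (-1) 1) (-1) :=
  isMaxOn_iff.mpr fun x hx => by nlinarith [mem_Icc.mp hx]

end Parabola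

/-- For `λ ≥ 1` and `θ ∈ [0, π/2]`, the range of
`f(t) = Re(t²) + Re(e^{2iθ}) − 4λ Re(t) cos θ` over the unit circle is
`[2cos²θ − 4λcos θ, 2cos²θ + 4λcos θ]` if `λ cos θ ≥ 1`, and
`[2(1 − λ²)cos²θ − 2, 2cos²θ + 4λcos θ]` if `λ cos θ < 1`. -/
theorem range_f_unit_circle (lam θ : ℝ) (hlam : 1 ≤ lam)
    (hθ : θ ∈ Set.Icc 0 (Real.pi / 2)) :
    (1 ≤ lam * Real.cos θ →
      {y : ℝ | ∃ t : ℂ, ‖t‖ = 1 ∧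
          y = (t ^ 2).re + (Complex.exp (2 * (θ : ℂ) * Complex.I)).re
              - 4 * lam * t.re * Real.cos θ} =
        Set.Icc (2 * Real.cos θ ^ 2 - 4 * lam * Real.cos θ)
          (2 * Real.cos θ ^ 2 + 4 * lam * Real.cos θ)) ∧
    (lam * Real.cos θ < 1 →
      {y : ℝ | ∃ t : ℂ, ‖t‖ = 1 ∧
          y = (t ^ 2).re + (Complex.exp (2 * (θ : ℂ) * Complex.I)).re
              - 4 * lam * t.re * Real.cos θ} =
        Set.Icc (2 * (1 - lam ^ 2) * Real.cos θ ^ 2 - 2)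
          (2 * Real.cos θ ^ 2 + 4 * lam * Real.cos θ)) := by
  set c := Real.cos θ
  have hc : 0 ≤ c := Real.cos_nonneg_of_mem_Icc ⟨by linarith [Real.pi_pos, hθ.1], hθ.2⟩
  have ha : 0 ≤ lam * c := mul_nonneg (by linarith) hc
  have hexp : (Complex.exp (2 * (θ : ℂ) * Complex.I)).re = 2 * c ^ 2 - 1 := by
    rw [show 2 * (θ : ℂ) * Complex.I = ((2 * θ : ℝ) : ℂ) * Complex.I by push_cast; ring,
      Complex.exp_ofReal_mul_I_re, Real.cos_two_mul]
  set p := fun x : ℝ => x ^ 2 - 2 * (lam * c) * x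
  set g := fun y : ℝ => 2 * y + (2 * c ^ 2 - 2)
  have hg : Monotone g := fun _ _ h => by simp only [g]; linarith
  have hf : ∀ t : ℂ, ‖t‖ = 1 →
      (t ^ 2).re + (Complex.exp (2 * (θ : ℂ) * Complex.I)).re - 4 * lam * t.re * c =
        (g ∘ p) t.re := fun t ht => by
    rw [Complex.re_sq_of_norm_eq_one ht, hexp]; simp only [Function.comp, g, p]; ring
  have hcont : ContinuousOn (g ∘ p) (Icc (-1) 1) := by fun_prop
  have hmax := (isMaxOn_sq_sub_two_mul_neg_one ha).comp_mono hg
  have hneg_one : (-1 : ℝ) ∈ Icc (-1) 1 := by norm_num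
  refine ⟨fun hbig => ?_, fun hsmall => ?_⟩
  · rw [setOf_eq_image_Icc_of_norm_eq_one hf, isPreconnected_Icc.image_eq_Icc_of_isMinOn_of_isMaxOn hcont (by norm_num) hneg_one
      ((isMinOn_sq_sub_two_mul_one hbig).comp_mono hg) hmax]
    congr 1 <;> simp only [Function.comp, g, p] <;> ring
  · rw [setOf_eq_image_Icc_of_norm_eq_one hf, isPreconnected_Icc.image_eq_Icc_of_isMinOn_of_isMaxOn hcont
      ⟨by linarith, hsmall.le⟩ hneg_one ((isMinOn_sq_sub_two_mul_vertex _).comp_mono hg) hmax]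
    congr 1 <;> simp only [Function.comp, g, p] <;> ring
end
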